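/- Let m ≥ 1, E = 2m, Q an orthogonal projection on ℂ^E = ℂ^m ⊕ ℂ^m, M_sy and M_asy the symmetric and antisymmetric diagonal subspaces, and 𝔖_Q := Q^⊥ − Q. Suppose a Dirac-type operator D has kernels satisfying dim ker p* = dim(ker Q ∩ M_sy) and dim ker p = dim((ker Q)^⊥ ∩ M_asy), with index Ind(D) := dim ker p* − dim ker p. Then Ind(D) = (1/2) tr 𝔖_Q. -/

import Mathlib

/-!
After transporting to `EuclideanSpace`, a self-adjoint `Q` has `range Q = (ker Q)ᗮ`, and
`Masy = Msyᗮ`, so `range Q ⊓ Masy = (ker Q ⊔ Msy)ᗮ`. Counting dimensions with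
`dim (K ⊓ S) + dim (K ⊔ S) = dim K + dim S` and rank–nullity gives
`dim (ker Q ⊓ Msy) - dim (range Q ⊓ Masy) = dim Msy - rank Q = m - tr Q`, because the trace of an
idempotent is its rank; and `m - tr Q = ½ tr (1 - 2Q)`.
-/

open Matrix

/-- The linear embedding c ↦ (c,c). -/
def symMap (m : ℕ) : (Fin m → ℂ) →ₗ[ℂ] (Fin m ⊕ Fin m → ℂ) where
  toFun c := Sum.elim c c
  map_add' x y := by funext i; cases i <;> simp
  map_smul' r x := by funext i; cases i <;> simp

/-- The linear embedding c ↦ (c,−c). -/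
def asymMap (m : ℕ) : (Fin m → ℂ) →ₗ[ℂ] (Fin m ⊕ Fin m → ℂ) where
  toFun c := Sum.elim c (-c)
  map_add' x y := by funext i; cases i <;> simp [add_comm]
  map_smul' r x := by funext i; cases i <;> simp

/-- The symmetric subspace M_sy = {(c,c)}. -/
noncomputable def Msy (m : ℕ) : Submodule ℂ (Fin m ⊕ Fin m → ℂ) := LinearMap.range (symMap m)

/-- The antisymmetric subspace M_asy = {(c,−c)}. -/
noncomputable def Masy (m : ℕ) : Submodule ℂ (Fin m ⊕ Fin m → ℂ) := LinearMap.range (asymMap m)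

open Module Submodule

section InnerProductSpace

variable {𝕜 E : Type*} [RCLike 𝕜] [NormedAddCommGroup E] [InnerProductSpace 𝕜 E]
  [FiniteDimensional 𝕜 E]

theorem Submodule.finrank_inf_add_finrank_eq_add_finrank_orthogonal_inf (K S : Submodule 𝕜 E) :
    finrank 𝕜 ↥(K ⊓ S) + finrank 𝕜 E = finrank 𝕜 K + finrank 𝕜 S + finrank 𝕜 ↥(Kᗮ ⊓ Sᗮ) := by
  rw [inf_orthogonal, ← finrank_add_finrank_orthogonal (K ⊔ S), ← add_assoc,
    add_comm (finrank 𝕜 ↥(K ⊓ S)), finrank_sup_add_finrank_inf_eq]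

theorem LinearMap.IsSymmetric.finrank_ker_inf_add_finrank_range {L : E →ₗ[𝕜] E}
    (hL : L.IsSymmetric) (S : Submodule 𝕜 E) :
    finrank 𝕜 ↥(LinearMap.ker L ⊓ S) + finrank 𝕜 (LinearMap.range L) =
      finrank 𝕜 S + finrank 𝕜 ↥(LinearMap.range L ⊓ Sᗮ) := by
  have hrange : LinearMap.range L = (LinearMap.ker L)ᗮ := by
    rw [← hL.orthogonal_range, orthogonal_orthogonal]
  have hdim := (LinearMap.ker L).finrank_inf_add_finrank_eq_add_finrank_orthogonal_inf S
  have hrank := L.finrank_range_add_finrank_ker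
  rw [← hrange] at hdim
  omega

end InnerProductSpace

namespace Matrix

variable {𝕜 ι : Type*} [RCLike 𝕜] [Fintype ι] [DecidableEq ι]

theorem toEuclideanLin_eq_comp (A : Matrix ι ι 𝕜) :
    A.toEuclideanLin = (WithLp.linearEquiv 2 𝕜 (ι → 𝕜)).symm.toLinearMap ∘ₗ A.mulVecLin ∘ₗ
      (WithLp.linearEquiv 2 𝕜 (ι → 𝕜)).toLinearMap :=
  rfl

theorem map_ker_mulVecLin (A : Matrix ι ι 𝕜) :
    (LinearMap.ker A.mulVecLin).map (WithLp.linearEquiv 2 𝕜 (ι → 𝕜)).symm.toLinearMap =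
      LinearMap.ker A.toEuclideanLin := by
  rw [toEuclideanLin_eq_comp, LinearEquiv.ker_comp, LinearMap.ker_comp,
    comap_equiv_eq_map_symm]

theorem map_range_mulVecLin (A : Matrix ι ι 𝕜) :
    (LinearMap.range A.mulVecLin).map (WithLp.linearEquiv 2 𝕜 (ι → 𝕜)).symm.toLinearMap =
      LinearMap.range A.toEuclideanLin := by
  rw [toEuclideanLin_eq_comp, LinearMap.range_comp,
    LinearMap.range_comp_of_range_eq_top _ (LinearEquiv.range _)]

theorem IsHermitian.finrank_ker_inf_add_finrank_range {A : Matrix ι ι 𝕜} (hA : A.IsHermitian)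
    {S T : Submodule 𝕜 (ι → 𝕜)}
    (hST : T.map (WithLp.linearEquiv 2 𝕜 (ι → 𝕜)).symm.toLinearMap =
      (S.map (WithLp.linearEquiv 2 𝕜 (ι → 𝕜)).symm.toLinearMap)ᗮ) :
    finrank 𝕜 ↥(LinearMap.ker A.mulVecLin ⊓ S) + finrank 𝕜 (LinearMap.range A.mulVecLin) =
      finrank 𝕜 S + finrank 𝕜 ↥(LinearMap.range A.mulVecLin ⊓ T) := by
  set e := (WithLp.linearEquiv 2 𝕜 (ι → 𝕜)).symm
  rw [← e.finrank_map_eq, ← e.finrank_map_eq (LinearMap.range _), ← e.finrank_map_eq S,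
    ← e.finrank_map_eq (_ ⊓ T), map_inf _ e.injective, map_inf _ e.injective, map_ker_mulVecLin,
    map_range_mulVecLin, hST]
  exact (isSymmetric_toEuclideanLin_iff.mpr hA).finrank_ker_inf_add_finrank_range _

theorem IsIdempotentElem.trace_eq_finrank_range {A : Matrix ι ι 𝕜} (hA : IsIdempotentElem A) :
    A.trace = finrank 𝕜 (LinearMap.range A.mulVecLin) := by
  rw [← trace_toLin'_eq, ((LinearMap.isProj_range_iff_isIdempotentElem _).mpr
    (show IsIdempotentElem (toLin' A) from hA.map toLinAlgEquiv')).trace]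
  rfl

end Matrix

section DiagonalSubspaces

variable {m : ℕ}

theorem symMap_injective : Function.Injective (symMap m) := fun _ _ h =>
  funext fun i => congrFun h (Sum.inl i)

theorem asymMap_injective : Function.Injective (asymMap m) := fun _ _ h =>
  funext fun i => congrFun h (Sum.inl i)

theorem finrank_Msy : finrank ℂ (Msy m) = m := by
  rw [Msy, LinearMap.finrank_range_of_inj symMap_injective, finrank_fin_fun]

theorem finrank_Masy : finrank ℂ (Masy m) = m := by
  rw [Masy, LinearMap.finrank_range_of_inj asymMap_injective, finrank_fin_fun]

theorem map_Masy_eq_orthogonal :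
    (Masy m).map (WithLp.linearEquiv 2 ℂ (Fin m ⊕ Fin m → ℂ)).symm.toLinearMap =
      ((Msy m).map (WithLp.linearEquiv 2 ℂ (Fin m ⊕ Fin m → ℂ)).symm.toLinearMap)ᗮ := by
  set e := (WithLp.linearEquiv 2 ℂ (Fin m ⊕ Fin m → ℂ)).symm
  refine eq_of_le_of_finrank_eq ?_ ?_
  · rintro _ ⟨_, ⟨d, rfl⟩, rfl⟩
    rw [mem_orthogonal]
    rintro _ ⟨_, ⟨c, rfl⟩, rfl⟩
    simp [e, PiLp.inner_apply, symMap, asymMap, Fintype.sum_sum_type]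
  · have hsum := finrank_add_finrank_orthogonal ((Msy m).map e.toLinearMap)
    rw [e.finrank_map_eq, finrank_Msy, finrank_euclideanSpace, Fintype.card_sum,
      Fintype.card_fin] at hsum
    rw [e.finrank_map_eq, finrank_Masy]
    omega

end DiagonalSubspaces

theorem stmt17_general {m : ℕ} (Q : Matrix (Fin m ⊕ Fin m) (Fin m ⊕ Fin m) ℂ)
    (hQ : Qᴴ = Q) (hQ2 : Q * Q = Q)
    (dimKerPstar dimKerP : ℕ)
    (hstar : dimKerPstar = Module.finrank ℂ ↥(LinearMap.ker Q.mulVecLin ⊓ Msy m))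
    (hp : dimKerP = Module.finrank ℂ ↥(LinearMap.range Q.mulVecLin ⊓ Masy m)) :
    (dimKerPstar : ℂ) - (dimKerP : ℂ) =
      (1 / 2) * Matrix.trace ((1 : Matrix (Fin m ⊕ Fin m) (Fin m ⊕ Fin m) ℂ) - (2 : ℂ) • Q) := by
  have hindex := IsHermitian.finrank_ker_inf_add_finrank_range hQ map_Masy_eq_orthogonal
  rw [finrank_Msy] at hindex
  have htrace : Matrix.trace ((1 : Matrix (Fin m ⊕ Fin m) (Fin m ⊕ Fin m) ℂ) - (2 : ℂ) • Q) =
      2 * ((m : ℂ) - finrank ℂ (LinearMap.range Q.mulVecLin)) := by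
    rw [trace_sub, trace_smul, trace_one, IsIdempotentElem.trace_eq_finrank_range hQ2,
      Fintype.card_sum, Fintype.card_fin]
    push_cast
    ring
  have hindex_cast := congrArg (Nat.cast : ℕ → ℂ) hindex
  push_cast at hindex_cast
  rw [htrace, hstar, hp]
  linear_combination hindex_cast

/-- The pre-index theorem combined with the trace formula: for the Dirac operator D with
kernels of p* and p of the given dimensions, Ind(D) = ½ tr 𝔖_Q with 𝔖_Q = Q^⊥ − Q = 1 − 2Q. -/
theorem stmt17 {m : ℕ} (hm : 0 < m) (Q : Matrix (Fin m ⊕ Fin m) (Fin m ⊕ Fin m) ℂ)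
    (hQ : Qᴴ = Q) (hQ2 : Q * Q = Q)
    (dimKerPstar dimKerP : ℕ)
    (hstar : dimKerPstar = Module.finrank ℂ ↥(LinearMap.ker Q.mulVecLin ⊓ Msy m))
    (hp : dimKerP = Module.finrank ℂ ↥(LinearMap.range Q.mulVecLin ⊓ Masy m)) :
    (dimKerPstar : ℂ) - (dimKerP : ℂ) =
      (1 / 2) * Matrix.trace ((1 : Matrix (Fin m ⊕ Fin m) (Fin m ⊕ Fin m) ℂ) - (2 : ℂ) • Q) :=
  stmt17_general Q hQ hQ2 dimKerPstar dimKerP hstar hp
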